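/- (Soundness of ι.) For all λ$-terms e, e', if e =λ$ e' then ι(e) =Λ$ ι(e'); and for all Λ$-terms M, M', if π(M) =λ$ π(M') then M =Λ$ M'. -/

import Mathlib

namespace Shift0

/-! ### The calculus Λ$ (de Bruijn representation) -/

/-- Terms of Λ$: variables, λ-abstractions, freeze `$(M)`, application, thaw `S₀(M)`. -/
inductive Tm : Type
  | var : Nat → Tm
  | lam : Tm → Tm
  | freeze : Tm → Tm
  | app : Tm → Tm → Tm
  | thaw : Tm → Tm
  deriving DecidableEq

namespace Tm

/-- Values of Λ$: variables, abstractions and frozen terms. -/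
inductive IsValue : Tm → Prop
  | var (n : Nat) : IsValue (.var n)
  | lam (M : Tm) : IsValue (.lam M)
  | freeze (M : Tm) : IsValue (.freeze M)

/-- Nonvalues of Λ$: applications and thawed terms. -/
inductive IsNonvalue : Tm → Prop
  | app (M N : Tm) : IsNonvalue (.app M N)
  | thaw (M : Tm) : IsNonvalue (.thaw M)

/-- Boolean value test. -/
def isVal : Tm → Bool
  | .var _ => true
  | .lam _ => true
  | .freeze _ => true
  | .app _ _ => false
  | .thaw _ => false

/-- Lift (shift) the free de Bruijn variables `≥ d` up by one. -/
def lift (d : Nat) : Tm → Tm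
  | .var n => if n < d then .var n else .var (n+1)
  | .lam M => .lam (lift (d+1) M)
  | .freeze M => .freeze (lift d M)
  | .app M N => .app (lift d M) (lift d N)
  | .thaw M => .thaw (lift d M)

/-- Capture-avoiding substitution `M[N/x]` (for the de Bruijn variable `x`);
the variables above `x` are shifted down by one. -/
def subst : Tm → Nat → Tm → Tm
  | .var n, x, N => if n = x then N else if n < x then .var n else .var (n-1)
  | .lam M, x, N => .lam (subst M (x+1) (N.lift 0))
  | .freeze M, x, N => .freeze (subst M x N)
  | .app M L, x, N => .app (subst M x N) (subst L x N)
  | .thaw M, x, N => .thaw (subst M x N)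

/-- `M $ N` is sugar for `$(N) M`. -/
def dol (M N : Tm) : Tm := .app (.freeze N) M

/-- `let x = M in N` is sugar for `S₀k.((λx.(k $ N)) $ M)`;
here `N` has the let-bound variable as de Bruijn index `0`. -/
def letIn (M N : Tm) : Tm :=
  .thaw (.lam (dol (.lam (dol (.var 1) (N.lift 1))) (M.lift 0)))

end Tm

/-- Bindable contexts `J ::= [] M | V [] | S₀([])`. -/
inductive JCtx : Type
  | appL : Tm → JCtx
  | appR : Tm → JCtx
  | thaw : JCtx

namespace JCtx

/-- Well-formedness: in `V []` the term `V` must be a value. -/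
def Wf : JCtx → Prop
  | .appL _ => True
  | .appR V => V.IsValue
  | .thaw => True

/-- Plugging a term into a bindable context. -/
def plug : JCtx → Tm → Tm
  | .appL N, M => .app M N
  | .appR V, M => .app V M
  | .thaw, M => .thaw M

/-- Lift the free variables `≥ d` of a bindable context. -/
def lift (d : Nat) : JCtx → JCtx
  | .appL N => .appL (N.lift d)
  | .appR V => .appR (V.lift d)
  | .thaw => .thaw

end JCtx

/-- Pure contexts `K ::= [] | J[K]`, represented as a list of bindable
contexts (head outermost). -/
abbrev KCtx : Type := List JCtx

/-- Plugging a term into a pure context. -/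
def KCtx.plug : KCtx → Tm → Tm
  | [], M => M
  | (J :: K), M => J.plug (KCtx.plug K M)

/-- Well-formedness of a pure context. -/
def KCtx.Wf (K : KCtx) : Prop := ∀ J ∈ K, JCtx.Wf J

/-- Lift the free variables `≥ d` of a pure context. -/
def KCtx.lift (d : Nat) (K : KCtx) : KCtx := K.map (JCtx.lift d)

namespace Tm

/-- The basic contractions of Λ$. -/
inductive Contr : Tm → Tm → Prop
  | betav (M V : Tm) : V.IsValue → Contr (.app (.lam M) V) (M.subst 0 V)
  | etav (V : Tm) : V.IsValue → Contr (.lam (.app (V.lift 0) (.var 0))) V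
  | dolv (V : Tm) : V.IsValue → Contr (.freeze V) (.lam (.app (.var 0) (V.lift 0)))
  | dolsh (V : Tm) : V.IsValue → Contr (.freeze (.thaw V)) V
  | shdol (M : Tm) : Contr (.thaw (.freeze M)) M
  | pure (V : Tm) : V.IsValue → Contr (.thaw (.lam (.app (.var 0) (V.lift 0)))) V
  | bind (J : JCtx) (P : Tm) : J.Wf → P.IsNonvalue →
      Contr (J.plug P) (letIn P ((J.lift 0).plug (.var 0)))

/-- One-step reduction of Λ$: closure of the contractions under arbitrary
contexts (including under binders). -/
inductive Step : Tm → Tm → Prop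
  | contr {M N : Tm} : Contr M N → Step M N
  | lam {M N : Tm} : Step M N → Step (.lam M) (.lam N)
  | freeze {M N : Tm} : Step M N → Step (.freeze M) (.freeze N)
  | appL {M N L : Tm} : Step M N → Step (.app M L) (.app N L)
  | appR {M N L : Tm} : Step M N → Step (.app L M) (.app L N)
  | thaw {M N : Tm} : Step M N → Step (.thaw M) (.thaw N)

/-- Multi-step reduction `↠Λ$`. -/
def Steps : Tm → Tm → Prop := Relation.ReflTransGen Step

/-- Convertibility `=Λ$`: the equivalence generated by reduction. -/
def Equiv : Tm → Tm → Prop := Relation.EqvGen Step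

end Tm

/-! ### The pure λ-calculus with βη -/

/-- Terms of the pure λ-calculus. -/
inductive Lam : Type
  | var : Nat → Lam
  | lam : Lam → Lam
  | app : Lam → Lam → Lam
  deriving DecidableEq

namespace Lam

/-- Lift the free de Bruijn variables `≥ d` up by one. -/
def lift (d : Nat) : Lam → Lam
  | .var n => if n < d then .var n else .var (n+1)
  | .lam M => .lam (lift (d+1) M)
  | .app M N => .app (lift d M) (lift d N)

/-- Capture-avoiding substitution `M[N/x]`. -/
def subst : Lam → Nat → Lam → Lam
  | .var n, x, N => if n = x then N else if n < x then .var n else .var (n-1)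
  | .lam M, x, N => .lam (subst M (x+1) (N.lift 0))
  | .app M L, x, N => .app (subst M x N) (subst L x N)

/-- β and η contractions. -/
inductive Contr : Lam → Lam → Prop
  | beta (M N : Lam) : Contr (.app (.lam M) N) (M.subst 0 N)
  | eta (M : Lam) : Contr (.lam (.app (M.lift 0) (.var 0))) M

/-- One-step βη-reduction, closed under arbitrary contexts. -/
inductive Step : Lam → Lam → Prop
  | contr {M N : Lam} : Contr M N → Step M N
  | lam {M N : Lam} : Step M N → Step (.lam M) (.lam N)
  | appL {M N L : Lam} : Step M N → Step (.app M L) (.app N L)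
  | appR {M N L : Lam} : Step M N → Step (.app L M) (.app L N)

/-- Multi-step βη-reduction `↠λ`. -/
def Steps : Lam → Lam → Prop := Relation.ReflTransGen Step

/-- βη-convertibility `=λ`. -/
def Equiv : Lam → Lam → Prop := Relation.EqvGen Step

end Lam

end Shift0

namespace Shift0

/-! ### The CPS translation `* : Λ$ → λ` and its value part `†` -/

mutual

/-- The CPS translation `M*`.  It is the full unfolding of the equations
`V* = λk.k V†`, `J[P]* = λk.P* (λx.(J[x]* k))`, `(V W)* = V† W†` and
`(S₀(V))* = V†`. -/
def cps : Tm → Lam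
  | .var n => .lam (.app (.var 0) (.var (n+1)))
  | .lam M => .lam (.app (.var 0) ((Lam.lam (cps M)).lift 0))
  | .freeze M => .lam (.app (.var 0) ((cps M).lift 0))
  | .app M N =>
      if M.isVal then
        if N.isVal then .app (cpsV M) (cpsV N)
        else
          .lam (.app ((cps N).lift 0)
            (.lam (.app (.app (((cpsV M).lift 0).lift 0) (.var 0)) (.var 1))))
      else
        if N.isVal then
          .lam (.app ((cps M).lift 0)
            (.lam (.app (.app (.var 0) (((cpsV N).lift 0).lift 0)) (.var 1))))
        else
          .lam (.app ((cps M).lift 0)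
            (.lam (.app
              (.lam (.app ((((cps N).lift 0).lift 0).lift 0)
                (.lam (.app (.app (.var 2) (.var 0)) (.var 1)))))
              (.var 1))))
  | .thaw M =>
      if M.isVal then cpsV M
      else .lam (.app ((cps M).lift 0) (.lam (.app (.var 0) (.var 1))))

/-- The value part `V†` of the CPS translation (junk on nonvalues). -/
def cpsV : Tm → Lam
  | .var n => .var n
  | .lam M => .lam (cps M)
  | .freeze M => cps M
  | .app _ _ => .var 0
  | .thaw _ => .var 0

end

/-! ### The direct-style translation `# : λ → Λ$` and its auxiliary `♮` -/

namespace Lam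

/-- Does the de Bruijn variable `x` occur free in the term? -/
def hasVar (x : Nat) : Lam → Bool
  | .var n => n = x
  | .lam M => hasVar (x+1) M
  | .app M N => hasVar x M || hasVar x N

/-- Shift the free de Bruijn variables `> d` down by one
(inverse of `lift d` on terms not containing `d` free). -/
def lower (d : Nat) : Lam → Lam
  | .var n => if d < n then .var (n-1) else .var n
  | .lam M => .lam (lower (d+1) M)
  | .app M N => .app (lower d M) (lower d N)

/-- Size of a λ-term. -/
def size : Lam → Nat
  | .var _ => 1
  | .lam M => size M + 1
  | .app M N => size M + size N + 1

theorem size_lower (d : Nat) (M : Lam) : (lower d M).size = M.size := by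
  induction M generalizing d with
  | var n => simp only [lower]; split <;> rfl
  | lam M ih => simp [lower, size, ih]
  | app M N ihM ihN => simp [lower, size, ihM, ihN]

end Lam

mutual

/-- The direct-style translation `M#`; the case `(λx.x N)# = N♮` (with
`x ∉ FV(N)`) is rendered by checking that de Bruijn variable `0` does not
occur in `N` and lowering the remaining variables. -/
def ds : Lam → Tm
  | .var n => .thaw (.var n)
  | .app M N => .app (nat M) (nat N)
  | .lam (.app (.var 0) N) =>
      if N.hasVar 0 then .thaw (.lam (.app (.var 0) (nat N)))
      else nat (N.lower 0)
  | .lam M => .thaw (.lam (ds M))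
termination_by M => M.size
decreasing_by all_goals simp [Lam.size, Lam.size_lower] <;> omega

/-- The auxiliary direct-style translation `M♮`. -/
def nat : Lam → Tm
  | .var n => .var n
  | .lam M => .lam (ds M)
  | .app M N => .freeze (.app (nat M) (nat N))
termination_by M => M.size
decreasing_by all_goals simp [Lam.size, Lam.size_lower] <;> omega

end

end Shift0

namespace Shift0

/-! ### Materzok's calculus λ$ -/

/-- Terms of λ$: variables, abstractions, applications, `S₀x.e`
(the body is under a binder) and `e $ e'`. -/
inductive LTm : Type
  | var : Nat → LTm
  | lam : LTm → LTm
  | app : LTm → LTm → LTm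
  | shift : LTm → LTm
  | dollar : LTm → LTm → LTm
  deriving DecidableEq

namespace LTm

/-- Values of λ$: variables and abstractions. -/
inductive IsValue : LTm → Prop
  | var (n : Nat) : IsValue (.var n)
  | lam (e : LTm) : IsValue (.lam e)

/-- Lift the free de Bruijn variables `≥ d` up by one. -/
def lift (d : Nat) : LTm → LTm
  | .var n => if n < d then .var n else .var (n+1)
  | .lam e => .lam (lift (d+1) e)
  | .app e f => .app (lift d e) (lift d f)
  | .shift e => .shift (lift (d+1) e)
  | .dollar e f => .dollar (lift d e) (lift d f)

/-- Capture-avoiding substitution `e[v/x]`. -/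
def subst : LTm → Nat → LTm → LTm
  | .var n, x, N => if n = x then N else if n < x then .var n else .var (n-1)
  | .lam e, x, N => .lam (subst e (x+1) (N.lift 0))
  | .app e f, x, N => .app (subst e x N) (subst f x N)
  | .shift e, x, N => .shift (subst e (x+1) (N.lift 0))
  | .dollar e f, x, N => .dollar (subst e x N) (subst f x N)

end LTm

/-- Pure contexts of λ$: `E ::= [] | E e | v E | E $ e`. -/
inductive ECtx : Type
  | hole : ECtx
  | appL : ECtx → LTm → ECtx
  | appR : LTm → ECtx → ECtx
  | dolL : ECtx → LTm → ECtx

namespace ECtx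

/-- Well-formedness: in `v E` the term `v` must be a value. -/
def Wf : ECtx → Prop
  | .hole => True
  | .appL E _ => E.Wf
  | .appR v E => v.IsValue ∧ E.Wf
  | .dolL E _ => E.Wf

/-- Plugging a term into a pure context of λ$. -/
def plug : ECtx → LTm → LTm
  | .hole, e => e
  | .appL E f, e => .app (E.plug e) f
  | .appR v E, e => .app v (E.plug e)
  | .dolL E f, e => .dollar (E.plug e) f

/-- Lift the free variables `≥ d` of a pure context. -/
def lift (d : Nat) : ECtx → ECtx
  | .hole => .hole
  | .appL E f => .appL (E.lift d) (f.lift d)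
  | .appR v E => .appR (v.lift d) (E.lift d)
  | .dolL E f => .dolL (E.lift d) (f.lift d)

end ECtx

namespace LTm

/-- The axioms of λ$. -/
inductive Ax : LTm → LTm → Prop
  | betav (e v : LTm) : v.IsValue → Ax (.app (.lam e) v) (e.subst 0 v)
  | etav (v : LTm) : v.IsValue → Ax (.lam (.app (v.lift 0) (.var 0))) v
  | dolv (v w : LTm) : v.IsValue → w.IsValue → Ax (.dollar v w) (.app v w)
  | dolE (v : LTm) (E : ECtx) (e : LTm) : v.IsValue → E.Wf →
      Ax (.dollar v (E.plug e))
         (.dollar (.lam (.dollar (v.lift 0) ((E.lift 0).plug (.var 0)))) e)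
  | betad (v e : LTm) : v.IsValue → Ax (.dollar v (.shift e)) (e.subst 0 v)
  | etad (e : LTm) : Ax (.shift (.dollar (.var 0) (e.lift 0))) e

/-- The axioms applied in an arbitrary context. -/
inductive AStep : LTm → LTm → Prop
  | ax {e f : LTm} : Ax e f → AStep e f
  | lam {e f : LTm} : AStep e f → AStep (.lam e) (.lam f)
  | appL {e f g : LTm} : AStep e f → AStep (.app e g) (.app f g)
  | appR {e f g : LTm} : AStep e f → AStep (.app g e) (.app g f)
  | shift {e f : LTm} : AStep e f → AStep (.shift e) (.shift f)
  | dolL {e f g : LTm} : AStep e f → AStep (.dollar e g) (.dollar f g)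
  | dolR {e f g : LTm} : AStep e f → AStep (.dollar g e) (.dollar g f)

/-- The equational theory `=λ$` generated by the axioms. -/
def Equiv : LTm → LTm → Prop := Relation.EqvGen AStep

end LTm

/-- The embedding `ι : λ$ → Λ$`. -/
def iota : LTm → Tm
  | .var n => .var n
  | .lam e => .lam (iota e)
  | .app e f => .app (iota e) (iota f)
  | .shift e => .thaw (.lam (iota e))
  | .dollar e f => .app (.freeze (iota f)) (iota e)

/-- The translation `π : Λ$ → λ$`. -/
def pi : Tm → LTm
  | .var n => .var n
  | .lam M => .lam (pi M)
  | .freeze M => .lam (.dollar (.var 0) ((pi M).lift 0))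
  | .app M N => .app (pi M) (pi N)
  | .thaw M => .app (.lam (.shift (.app (.var 1) (.var 0)))) (pi M)

/-- Materzok's CPS translation `⟦·⟧ : λ$ → λ` (with the value translation
`⟪x⟫ = x`, `⟪λx.e⟫ = λx.⟦e⟧` inlined). -/
def mcps : LTm → Lam
  | .var n => .lam (.app (.var 0) (.var (n+1)))
  | .lam e => .lam (.app (.var 0) ((Lam.lam (mcps e)).lift 0))
  | .app e f => .lam (.app ((mcps e).lift 0)
      (.lam (.app (((mcps f).lift 0).lift 0)
        (.lam (.app (.app (.var 1) (.var 0)) (.var 2))))))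
  | .shift e => .lam (mcps e)
  | .dollar e f => .lam (.app ((mcps e).lift 0)
      (.lam (.app (.app (((mcps f).lift 0).lift 0) (.var 0)) (.var 1))))

end Shift0

/-!
Each axiom of λ$ becomes a Λ$-equation under ι: (βv) and (ηv) are contractions of Λ$, ($v), (β$)
and (η$) take two steps each, and the non-local axiom ($E) is proved one bindable frame at a time:
(bind) moves the frame out of the hole as a `let`, which ($S₀) and (βv) then consume.
For the second half it suffices that ι(π(M)) =Λ$ M. The only nontrivial cases are
ι(π($(M))) = λx.$(M) x, an η-redex, and ι(π(S₀(M))) = (λx.S₀k.x k) M, which collapses to S₀(M)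
by (βv) and (ηv) when M is a value and, when it is not, after binding M on both sides.
-/

theorem Relation.EqvGen.map {α β : Type*} {r : α → α → Prop} {s : β → β → Prop} {f : α → β}
    (h : ∀ a b, r a b → EqvGen s (f a) (f b)) {a b : α} (hab : EqvGen r a b) :
    EqvGen s (f a) (f b) := by
  induction hab with
  | rel a b hab => exact h a b hab
  | refl a => exact .refl _
  | symm a b _ ih => exact .symm _ _ ih
  | trans a b c _ _ ih₁ ih₂ => exact .trans _ _ _ ih₁ ih₂

namespace Shift0

local infix:50 " =Λ " => Tm.Equiv

namespace Tm

theorem lift_lift (M : Tm) {d e : Nat} (h : e ≤ d) :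
    (M.lift d).lift e = (M.lift e).lift (d + 1) := by
  induction M generalizing d e with
  | var n => simp only [lift]; split_ifs <;> simp only [lift] <;> split_ifs <;> first | rfl | omega
  | lam M ih => simp only [lift, ih (Nat.succ_le_succ h)]
  | freeze M ih => simp only [lift, ih h]
  | app M N ihM ihN => simp only [lift, ihM h, ihN h]
  | thaw M ih => simp only [lift, ih h]

@[simp]
theorem subst_lift (M N : Tm) (d : Nat) : (M.lift d).subst d N = M := by
  induction M generalizing d N with
  | var n =>
      simp only [lift]
      split_ifs <;> simp only [subst] <;> split_ifs <;> first | rfl | omega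
  | lam M ih => simp only [lift, subst, ih]
  | freeze M ih => simp only [lift, subst, ih]
  | app M L ihM ihL => simp only [lift, subst, ihM, ihL]
  | thaw M ih => simp only [lift, subst, ih]

theorem IsValue.lift {V : Tm} (h : V.IsValue) (d : Nat) : (V.lift d).IsValue := by
  cases h with
  | var n => simp only [Tm.lift]; split <;> exact .var _
  | lam M => exact .lam _
  | freeze M => exact .freeze _

theorem isValue_or_isNonvalue : ∀ M : Tm, M.IsValue ∨ M.IsNonvalue
  | .var n => .inl (.var n)
  | .lam M => .inl (.lam M)
  | .freeze M => .inl (.freeze M)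
  | .app M N => .inr (.app M N)
  | .thaw M => .inr (.thaw M)

theorem Contr.equiv {M N : Tm} (h : Contr M N) : Equiv M N := .rel _ _ (.contr h)

theorem Contr.equiv_of_eq {M N N' : Tm} (h : Contr M N) (e : N = N') : Equiv M N' := e ▸ h.equiv

namespace Equiv

theorem symm {M N : Tm} (h : Equiv M N) : Equiv N M := Relation.EqvGen.symm _ _ h

theorem trans {M N L : Tm} (h₁ : Equiv M N) (h₂ : Equiv N L) : Equiv M L :=
  Relation.EqvGen.trans _ _ _ h₁ h₂

theorem of_step_congr {f : Tm → Tm} (hf : ∀ {M N}, Step M N → Step (f M) (f N)) {M N : Tm}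
    (h : Equiv M N) : Equiv (f M) (f N) :=
  Relation.EqvGen.map (fun _ _ hs => .rel _ _ (hf hs)) h

theorem lam {M N : Tm} (h : Equiv M N) : Equiv (.lam M) (.lam N) := of_step_congr .lam h

theorem freeze {M N : Tm} (h : Equiv M N) : Equiv (.freeze M) (.freeze N) :=
  of_step_congr .freeze h

theorem thaw {M N : Tm} (h : Equiv M N) : Equiv (.thaw M) (.thaw N) := of_step_congr .thaw h

theorem app {M M' N N' : Tm} (hM : Equiv M M') (hN : Equiv N N') :
    Equiv (.app M N) (.app M' N') :=
  (of_step_congr (f := (.app · N)) .appL hM).trans (of_step_congr .appR hN)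

theorem app_right {M N N' : Tm} (h : Equiv N N') : Equiv (.app M N) (.app M N') :=
  app (.refl _) h

end Equiv

instance : Trans Equiv Equiv Equiv := ⟨Equiv.trans⟩

theorem dol_equiv_app {U V : Tm} (hU : U.IsValue) (hV : V.IsValue) : dol U V =Λ .app U V :=
  calc dol U V
    _ = .app (.freeze V) U := rfl
    _ =Λ .app (.lam (.app (.var 0) (V.lift 0))) U := Equiv.app (Contr.dolv V hV).equiv (.refl _)
    _ =Λ .app U V := (Contr.betav _ U hU).equiv_of_eq (by simp [subst])

theorem dol_letIn_equiv {V : Tm} (hV : V.IsValue) (M N : Tm) :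
    dol V (letIn M N) =Λ dol (.lam (dol (V.lift 0) N)) M :=
  calc dol V (letIn M N)
    _ =Λ .app (.lam (dol (.lam (dol (.var 1) (N.lift 1))) (M.lift 0))) V :=
      Equiv.app (Contr.dolsh _ (.lam _)).equiv (.refl _)
    _ =Λ dol (.lam (dol (V.lift 0) N)) M :=
      (Contr.betav _ V hV).equiv_of_eq (by simp [dol, subst])

end Tm

namespace JCtx

@[simp]
theorem subst_plug_var (J : JCtx) (N : Tm) :
    ((J.lift 0).plug (.var 0)).subst 0 N = J.plug N := by
  cases J <;> simp [plug, lift, Tm.subst]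

theorem lift_plug_var (J : JCtx) :
    ((J.lift 0).plug (.var 0)).lift 1 = ((J.lift 0).lift 0).plug (.var 0) := by
  cases J <;> simp [plug, lift, Tm.lift, Tm.lift_lift _ le_rfl]

theorem Wf.lift {J : JCtx} (h : J.Wf) (d : Nat) : (J.lift d).Wf := by
  cases J with
  | appL N => trivial
  | appR V => exact Tm.IsValue.lift h d
  | thaw => trivial

end JCtx

namespace Tm

theorem dol_jplug_equiv {J : JCtx} (hJ : J.Wf) {V : Tm} (hV : V.IsValue) (N : Tm) :
    dol V (J.plug N) =Λ dol (.lam (dol (V.lift 0) ((J.lift 0).plug (.var 0)))) N := by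
  rcases isValue_or_isNonvalue N with hN | hN
  · refine Equiv.symm ?_
    calc dol (.lam (dol (V.lift 0) ((J.lift 0).plug (.var 0)))) N
      _ =Λ .app (.lam (dol (V.lift 0) ((J.lift 0).plug (.var 0)))) N := dol_equiv_app (.lam _) hN
      _ =Λ dol V (J.plug N) := (Contr.betav _ N hN).equiv_of_eq (by simp [dol, subst])
  · calc dol V (J.plug N)
      _ =Λ dol V (letIn N ((J.lift 0).plug (.var 0))) :=
        Equiv.app (Equiv.freeze (Contr.bind J N hJ hN).equiv) (.refl _)
      _ =Λ _ := dol_letIn_equiv hV _ _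

theorem dol_kplug_equiv {K : KCtx} (hK : K.Wf) {V : Tm} (hV : V.IsValue) (M : Tm) :
    dol V (K.plug M) =Λ dol (.lam (dol (V.lift 0) ((K.lift 0).plug (.var 0)))) M := by
  induction K generalizing V with
  | nil =>
    have hη : .lam (dol (V.lift 0) (.var 0)) =Λ V :=
      calc _ =Λ .lam (.app (V.lift 0) (.var 0)) := Equiv.lam (dol_equiv_app (hV.lift 0) (.var 0))
        _ =Λ V := (Contr.etav V hV).equiv
    exact (Equiv.app_right hη).symm
  | cons J K ih =>
    obtain ⟨hJ, hK⟩ := List.forall_mem_cons.1 hK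
    set W : Tm := .lam (dol (V.lift 0) ((J.lift 0).plug (.var 0)))
    have hW : W.lift 0 = .lam (dol ((V.lift 0).lift 0) (((J.lift 0).lift 0).plug (.var 0))) := by
      simp only [W, lift, dol, Nat.zero_add, JCtx.lift_plug_var, ← lift_lift V le_rfl]
    calc dol V (J.plug (KCtx.plug K M))
      _ =Λ dol W (KCtx.plug K M) := dol_jplug_equiv hJ hV _
      _ =Λ dol (.lam (dol (W.lift 0) ((KCtx.lift 0 K).plug (.var 0)))) M := ih hK (.lam _)
      _ =Λ _ :=
        Equiv.app_right <| Equiv.lam <| hW ▸ (dol_jplug_equiv (hJ.lift 0) (hV.lift 0) _).symm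

-- `λx.S₀k.x k`, the term by which π translates `S₀`.
def thawLam : Tm := .lam (.thaw (.lam (.app (.var 1) (.var 0))))

@[simp]
theorem lift_thawLam (d : Nat) : thawLam.lift d = thawLam := by
  simp [thawLam, lift]

theorem app_thawLam_equiv_of_isValue {V : Tm} (hV : V.IsValue) : .app thawLam V =Λ .thaw V :=
  calc .app thawLam V
    _ =Λ .thaw (.lam (.app (V.lift 0) (.var 0))) :=
      (Contr.betav _ V hV).equiv_of_eq (by simp [subst])
    _ =Λ .thaw V := Equiv.thaw (Contr.etav V hV).equiv

theorem app_thawLam_equiv (M : Tm) : .app thawLam M =Λ .thaw M := by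
  rcases isValue_or_isNonvalue M with hM | hM
  · exact app_thawLam_equiv_of_isValue hM
  have hbody : letIn M (.app thawLam (.var 0)) =Λ letIn M (.thaw (.var 0)) := by
    have h := app_thawLam_equiv_of_isValue (.var 0)
    simpa [letIn, dol, lift] using
      Equiv.thaw <| Equiv.lam <| Equiv.app_right <| Equiv.lam <| Equiv.app h.freeze (.refl _)
  calc .app thawLam M
    _ =Λ letIn M (.app thawLam (.var 0)) :=
      (Contr.bind (.appR thawLam) M (.lam _) hM).equiv_of_eq (by simp [JCtx.lift, JCtx.plug])
    _ =Λ letIn M (.thaw (.var 0)) := hbody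
    _ =Λ .thaw M := (Contr.bind .thaw M trivial hM).equiv.symm

end Tm

theorem iota_isValue {v : LTm} (h : v.IsValue) : (iota v).IsValue := by
  cases h with
  | var n => exact .var n
  | lam e => exact .lam _

theorem iota_lift (e : LTm) (d : Nat) : iota (e.lift d) = (iota e).lift d := by
  induction e generalizing d with
  | var n => simp only [LTm.lift]; split <;> simp [iota, Tm.lift, *]
  | _ => simp [LTm.lift, iota, Tm.lift, *]

theorem iota_subst (e : LTm) (x : Nat) (v : LTm) :
    iota (e.subst x v) = (iota e).subst x (iota v) := by
  induction e generalizing x v with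
  | var n => simp only [LTm.subst]; split_ifs <;> simp [iota, Tm.subst, *]
  | _ => simp [LTm.subst, iota, Tm.subst, iota_lift, *]

def ECtx.iota : ECtx → KCtx
  | .hole => []
  | .appL E f => .appL (Shift0.iota f) :: E.iota
  | .appR v E => .appR (Shift0.iota v) :: E.iota
  | .dolL E f => .appR (.freeze (Shift0.iota f)) :: E.iota

namespace ECtx

theorem iota_plug (E : ECtx) (e : LTm) : Shift0.iota (E.plug e) = E.iota.plug (Shift0.iota e) := by
  induction E <;> simp [plug, iota, KCtx.plug, Shift0.iota, JCtx.plug, *]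

theorem iota_lift (E : ECtx) (d : Nat) : (E.lift d).iota = KCtx.lift d E.iota := by
  induction E <;> simp [lift, iota, KCtx.lift, JCtx.lift, Shift0.iota_lift, Tm.lift, *]

theorem Wf.iota {E : ECtx} (h : E.Wf) : KCtx.Wf E.iota := by
  induction E with
  | hole => exact List.forall_mem_nil _
  | appL E f ih => exact List.forall_mem_cons.2 ⟨trivial, ih h⟩
  | appR v E ih => exact List.forall_mem_cons.2 ⟨iota_isValue h.1, ih h.2⟩
  | dolL E f ih => exact List.forall_mem_cons.2 ⟨.freeze _, ih h⟩

end ECtx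

open Tm in
theorem iota_equiv_of_ax {e f : LTm} (h : LTm.Ax e f) : iota e =Λ iota f := by
  cases h with
  | betav e v hv =>
    rw [iota_subst]
    exact (Contr.betav _ _ (iota_isValue hv)).equiv
  | etav v hv =>
    simp only [iota, iota_lift]
    exact (Contr.etav _ (iota_isValue hv)).equiv
  | dolv v w hv hw => exact dol_equiv_app (iota_isValue hv) (iota_isValue hw)
  | dolE v E e hv hE =>
    simp only [iota, ECtx.iota_plug, ECtx.iota_lift, iota_lift]
    exact dol_kplug_equiv hE.iota (iota_isValue hv) _
  | betad v e hv =>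
    rw [iota_subst]
    calc .app (.freeze (.thaw (.lam (iota e)))) (iota v)
      _ =Λ .app (.lam (iota e)) (iota v) := Equiv.app (Contr.dolsh _ (.lam _)).equiv (.refl _)
      _ =Λ (iota e).subst 0 (iota v) := (Contr.betav _ _ (iota_isValue hv)).equiv
  | etad e =>
    simp only [iota, iota_lift]
    calc .thaw (.lam (.app (.freeze ((iota f).lift 0)) (.var 0)))
      _ =Λ .thaw (.freeze (iota f)) := Equiv.thaw (Contr.etav (.freeze (iota f)) (.freeze _)).equiv
      _ =Λ iota f := (Contr.shdol _).equiv

theorem iota_equiv_of_aStep {e f : LTm} (h : LTm.AStep e f) : iota e =Λ iota f := by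
  induction h with
  | ax h => exact iota_equiv_of_ax h
  | lam _ ih => exact ih.lam
  | appL _ ih => exact ih.app (.refl _)
  | appR _ ih => exact Tm.Equiv.app_right ih
  | shift _ ih => exact ih.lam.thaw
  | dolL _ ih => exact Tm.Equiv.app_right ih
  | dolR _ ih => exact ih.freeze.app (.refl _)

theorem iota_equiv {e f : LTm} (h : LTm.Equiv e f) : iota e =Λ iota f :=
  Relation.EqvGen.map (fun _ _ hs => iota_equiv_of_aStep hs) h

theorem iota_pi_equiv (M : Tm) : iota (pi M) =Λ M := by
  induction M with
  | var n => exact .refl _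
  | lam M ih => exact ih.lam
  | freeze M ih =>
    simp only [pi, iota, iota_lift]
    calc .lam (.app (.freeze ((iota (pi M)).lift 0)) (.var 0))
      _ =Λ .freeze (iota (pi M)) := (Tm.Contr.etav (.freeze (iota (pi M))) (.freeze _)).equiv
      _ =Λ .freeze M := ih.freeze
  | app M N ihM ihN => exact ihM.app ihN
  | thaw M ih => exact (Tm.app_thawLam_equiv _).trans ih.thaw

/-- **Soundness of ι.**  If `e =λ$ e'` then `ι(e) =Λ$ ι(e')`; and if
`π(M) =λ$ π(M')` then `M =Λ$ M'`. -/
theorem iota_sound :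
    (∀ e e' : LTm, LTm.Equiv e e' → Tm.Equiv (iota e) (iota e')) ∧
    (∀ M M' : Tm, LTm.Equiv (pi M) (pi M') → Tm.Equiv M M') := by
  refine ⟨fun e e' => iota_equiv, fun M M' h => ?_⟩
  calc M
    _ =Λ iota (pi M) := (iota_pi_equiv M).symm
    _ =Λ iota (pi M') := iota_equiv h
    _ =Λ M' := iota_pi_equiv M'

end Shift0
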